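/- For every ray u of the Peres set PS and every colour c ∈ {green, red}, there exists a two-element set A of colourings of PS such that every γ ∈ A satisfies γ(u) = c and, for every family 𝓕 of pairwise disjoint PKS events, A ⊄ ⋃𝓕. Consequently the multiplicative co-event A* maps every PKS event and every disjoint union of PKS events to 0 while valuing the event {γ ∈ Ω : γ(u) = c} as 1. -/
import Mathlib


noncomputable section

/-- Vectors in `ℝ³`. -/
abbrev V3 : Type := Fin 3 → ℝ

/-- The standard inner product on `ℝ³`. -/
def dot3 (x y : V3) : ℝ := x 0 * y 0 + x 1 * y 1 + x 2 * y 2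

/-- The multiset of absolute values of the coordinates of a vector in `ℝ³`. -/
def absCoords (x : V3) : Multiset ℝ := {|x 0|, |x 1|, |x 2|}

/-- The Peres set `PS`: the 33 rays (1-dimensional linear subspaces) of `ℝ³` spanned by
nonzero vectors whose multiset of absolute values of coordinates is one of
`{0,0,1}`, `{0,1,1}`, `{0,1,2}`, `{1,1,2}`. -/
def PeresSet : Set (Submodule ℝ V3) :=
  {L | ∃ v : V3, v ≠ 0 ∧ L = Submodule.span ℝ {v} ∧
    (absCoords v = {0, 0, 1} ∨ absCoords v = {0, 1, 1} ∨
      absCoords v = {0, 1, 2} ∨ absCoords v = {1, 1, 2})}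

/-- Two rays are orthogonal if their elements are orthogonal for the standard
inner product on `ℝ³`. -/
def RayOrtho (L M : Submodule ℝ V3) : Prop := ∀ x ∈ L, ∀ y ∈ M, dot3 x y = 0

/-- Three mutually orthogonal rays. -/
def MutuallyOrtho (L M N : Submodule ℝ V3) : Prop :=
  RayOrtho L M ∧ RayOrtho L N ∧ RayOrtho M N

/-- The two colours. -/
inductive Colour : Type
  | green
  | red
deriving DecidableEq

/-- A colouring of the Peres set. -/
def Colouring : Type := {L : Submodule ℝ V3 // L ∈ PeresSet} → Colour

/-- The PKS events: subsets of the space `Ω` of colourings of the form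
`R_B` (all three rays of a triple `B` of mutually orthogonal rays of `PS` coloured red)
or `G_P` (both rays of an orthogonal pair `P` in `PS` coloured green). -/
def IsPKSEvent (E : Set Colouring) : Prop :=
  (∃ u v w : {L : Submodule ℝ V3 // L ∈ PeresSet}, MutuallyOrtho u.1 v.1 w.1 ∧
      E = {γ : Colouring | γ u = Colour.red ∧ γ v = Colour.red ∧ γ w = Colour.red}) ∨
  (∃ u v : {L : Submodule ℝ V3 // L ∈ PeresSet}, RayOrtho u.1 v.1 ∧
      E = {γ : Colouring | γ u = Colour.green ∧ γ v = Colour.green})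

/-- The multiplicative co-event `A*` with support `A`: `A*(B) = 1` iff `A ⊆ B`. -/
def coevent (A : Set Colouring) : Set Colouring → ZMod 2 :=
  open scoped Classical in fun B => if A ⊆ B then 1 else 0



-- ===================== auxiliary machinery =====================

namespace Stmt9Aux

def R33 : List (List Int) := [[1, 0, 0], [0, 0, 1], [0, 1, 0], [1, 0, 1], [1, 0, -1], [1, 1, 0], [1, -1, 0], [0, 1, 1], [0, 1, -1], [0, 2, 1], [0, 2, -1], [1, 2, 0], [1, -2, 0], [2, 1, 0], [2, -1, 0], [2, 0, 1], [2, 0, -1], [0, 1, 2], [0, 1, -2], [1, 0, 2], [1, 0, -2], [1, 2, 1], [1, 2, -1], [1, -2, 1], [1, -2, -1], [2, 1, 1], [2, 1, -1], [2, -1, 1], [2, -1, -1], [1, 1, 2], [1, 1, -2], [1, -1, 2], [1, -1, -2]]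

def Zv (i k : ℕ) : ℤ := (R33.getD i []).getD k 0

def rvec (i : ℕ) : V3 := fun k => ((Zv i k.val : ℤ) : ℝ)

def Dint (i j : ℕ) : ℤ := Zv i 0 * Zv j 0 + Zv i 1 * Zv j 1 + Zv i 2 * Zv j 2

def M01 (i j : ℕ) : ℤ := Zv i 0 * Zv j 1 - Zv i 1 * Zv j 0
def M02 (i j : ℕ) : ℤ := Zv i 0 * Zv j 2 - Zv i 2 * Zv j 0
def M12 (i j : ℕ) : ℤ := Zv i 1 * Zv j 2 - Zv i 2 * Zv j 1

def edgeL : List ℕ := [1, 2, 7, 8, 9, 10, 17, 18, 33, 35, 38, 39, 44, 45, 46, 47, 66, 67, 69, 70, 81, 82, 85, 86, 101, 103, 121, 123, 134, 135, 153, 155, 166, 171, 196, 197, 199, 203, 227, 228, 231, 239, 257, 258, 264, 271, 289, 292, 297, 315, 327, 328, 330, 347, 359, 362, 364, 377, 390, 391, 397, 409, 421, 422, 430, 441, 452, 453, 463, 473, 483, 484, 497, 515, 525, 527, 530, 547, 557, 559, 561, 571, 583, 584, 594, 603, 615, 618, 629, 643, 653, 655, 662, 675, 685, 687, 697, 707,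 711, 729, 740, 743, 763, 772, 776, 795, 805, 810, 833, 837, 845, 865, 870, 877, 898, 902, 911, 932, 935, 943, 963, 967, 973, 996, 999, 1005, 1028, 1032, 1039, 1061, 1066, 1071]

def triL : List ℕ := [35, 67, 239, 271, 315, 347, 571, 603, 1091, 1155, 1260, 1292, 1466, 1498, 1530, 1562, 2179, 2211, 2281, 2313, 2693, 2725, 2821, 2853, 3337, 3401, 4425, 4457, 5484, 5644, 6572, 6700, 7631, 7887, 8719, 8943, 9819, 10395, 10907, 11451, 12026, 12442, 13114, 13498, 14202, 14554, 15290, 15610, 16421, 16997, 17509, 18053, 18523, 18843, 19611, 19899, 20773, 21221, 21861, 22277]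

def TAg : List (List ℕ) := [[0, 3, 15], [1, 19], [2, 7, 9, 13], [0, 3], [1, 4, 16, 17, 20], [0, 3, 5], [2, 6, 14], [1, 7, 16, 17], [6, 8, 14, 18], [3, 8, 9, 17, 19], [4, 5, 7, 10, 11, 13], [7, 11, 18], [0, 3, 12, 14], [3, 10, 13, 16, 18], [2, 9, 12, 14], [3, 6, 12, 15], [4, 8, 15, 16, 17], [1, 8, 15, 16, 17, 18], [4, 6, 7, 11, 13, 15, 18], [0, 4, 19, 20], [3, 9, 16, 20], [0, 20, 21], [0, 15, 19, 22], [2, 7, 10, 23], [10, 15, 24], [7, 18, 25], [0, 6, 13, 26], [6, 8, 12, 17, 19, 27], [1, 10, 20, 28], [5, 13, 29], [2, 30], [0, 3, 11, 15, 31], [2, 6, 18, 32]]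
def TBg : List (List ℕ) := [[0, 6, 12, 14, 19], [1, 3, 8, 9, 17, 20], [2, 5, 10, 14], [1, 3, 15, 19], [4, 8, 18], [5, 12, 14, 15, 16, 18], [0, 6, 12], [3, 7, 9, 14, 20], [2, 8, 13, 17], [1, 9, 20], [2, 10, 18], [2, 5, 10, 11, 12], [6, 12, 16, 20], [0, 6, 11, 13, 15], [6, 7, 10, 14, 16], [0, 11, 15, 16], [1, 16, 18], [3, 17], [1, 17, 18, 19], [1, 18, 19], [1, 8, 10, 20], [3, 6, 11, 13, 19, 21], [1, 4, 7, 22], [1, 18, 19, 23], [0, 4, 6, 12, 14, 19, 24], [2, 6, 13, 14, 17, 25], [2, 11, 26], [1, 4, 9, 15, 27], [4, 7, 16, 18, 28], [0, 3, 11, 19, 20, 29], [1, 7, 16, 17, 18, 30], [6, 12, 19, 31], [0, 11, 13, 32]]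
def TAr : List (List ℕ) := [[2, 8, 11, 13, 17], [0, 4, 11, 19], [4, 7, 15, 16, 17], [1, 4, 10, 15, 19], [1, 20], [0, 11, 13], [1, 18, 19], [8, 18, 20], [4, 15, 16], [4, 6, 13, 16], [0, 6], [1, 16, 20], [3, 8, 9, 10, 13, 14], [0, 4, 16, 20], [4, 7, 10], [0, 5], [1, 3, 8], [0, 5, 15, 16], [6, 11, 13], [0, 4, 5], [0, 12, 15], [0, 4, 11], [1, 10], [0, 5, 12, 14], [2, 12], [0, 6], [0, 3, 20], [2, 8, 11, 12], [0, 4, 5, 14], [3, 5, 8, 16, 17], [1, 8, 10, 15], [3, 5, 13, 15], [2, 6, 7, 10, 12, 14]]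
def TBr : List (List ℕ) := [[6, 15, 16, 18], [5, 8, 13, 15, 17, 18], [1, 9], [7, 9, 14], [0, 3, 19], [2, 6, 18], [0, 3, 13, 14, 20], [1, 3, 17, 19], [0, 5, 11, 13], [0, 14, 15], [2, 11, 12], [0, 3], [2, 6], [5, 8, 12, 14, 18], [1, 9, 15, 16], [2, 10, 13, 14], [15, 17, 18, 19], [4, 9, 11, 13], [0, 3, 16, 20], [9, 11, 13, 15, 16, 17], [4, 5, 11, 19], [2, 5, 10, 12], [2, 7, 18], [2], [1, 8, 10, 18], [2, 11, 13], [1, 7, 16], [0, 6], [13, 15, 16], [1, 9, 20], [2, 9], [0, 14, 16], [18, 19]]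
def Wg : List ℕ := [3, 3, 5, 0, 1, 0, 0, 1, 2, 1, 2, 2, 0, 0, 2, 0, 1, 1, 1, 0, 1, 0, 0, 1, 0, 2, 0, 1, 1, 0, 1, 0, 0]
def Wr : List ℕ := [2, 0, 1, 1, 0, 0, 0, 1, 0, 0, 0, 0, 2, 0, 1, 0, 1, 0, 0, 0, 0, 0, 1, 0, 1, 0, 0, 0, 0, 1, 1, 0, 2]

lemma ms_swap12 (a b c : ℝ) : ({a, b, c} : Multiset ℝ) = {b, a, c} :=
  Multiset.cons_swap a b {c}

lemma ms_swap23 (a b c : ℝ) : ({a, b, c} : Multiset ℝ) = {a, c, b} :=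
  congrArg (a ::ₘ ·) (Multiset.cons_swap b c 0)

lemma dot3_rvec (i j : ℕ) : dot3 (rvec i) (rvec j) = ((Dint i j : ℤ) : ℝ) := by
  simp only [dot3, rvec, Dint, Fin.val_zero, Fin.val_one, Fin.val_two]
  push_cast; ring

lemma ortho_dint {i j : ℕ}
    (h : RayOrtho (Submodule.span ℝ {rvec i}) (Submodule.span ℝ {rvec j})) :
    Dint i j = 0 := by
  have h2 := h (rvec i) (Submodule.mem_span_singleton_self _)
    (rvec j) (Submodule.mem_span_singleton_self _)
  rw [dot3_rvec] at h2
  exact_mod_cast h2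

set_option maxRecDepth 40000 in
lemma Mdec : ∀ i < 33, ∀ j < 33, M01 i j = 0 → M02 i j = 0 → M12 i j = 0 → i = j := by decide

set_option maxRecDepth 40000 in
lemma F1 : ∀ i < 33, ∀ j < 33, Dint i j = 0 → (i * 33 + j) ∈ edgeL := by decide

set_option maxRecDepth 40000 in
lemma F2 : ∀ e ∈ edgeL, ∀ k < 33, Dint (e / 33) k = 0 → Dint (e % 33) k = 0 →
    (e * 33 + k) ∈ triL := by decide

set_option maxRecDepth 40000 in
set_option maxHeartbeats 2000000 in
lemma classify001 (v : V3) (ht : absCoords v = ({(0 : ℝ), (0 : ℝ), (1 : ℝ)} : Multiset ℝ)) :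
    ∃ i, i < 33 ∧ Submodule.span ℝ {v} = Submodule.span ℝ {rvec i} := by
  have m0 : |v 0| ∈ ({(0 : ℝ), (0 : ℝ), (1 : ℝ)} : Multiset ℝ) := by rw [← ht]; simp [absCoords]
  have m1 : |v 1| ∈ ({(0 : ℝ), (0 : ℝ), (1 : ℝ)} : Multiset ℝ) := by rw [← ht]; simp [absCoords]
  have m2 : |v 2| ∈ ({(0 : ℝ), (0 : ℝ), (1 : ℝ)} : Multiset ℝ) := by rw [← ht]; simp [absCoords]
  have hs := congrArg Multiset.sum ht
  have hsq := congrArg (fun s => (s.map (fun x => x*x)).sum) ht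
  simp [absCoords] at m0 m1 m2 hs hsq
  rcases m0 with a0|a0
  · rcases m1 with a1|a1
    · rcases m2 with a2|a2
      · simp only [a0, a1, a2, abs_zero] at hs; norm_num at hs
      · rcases (abs_eq (by norm_num : (0:ℝ) ≤ 1)).mp a2 with s2|s2
        · refine ⟨1, by norm_num, ?_⟩
          have hv : v = rvec 1 := by funext k; fin_cases k <;> simp [rvec, Zv, R33, a0, a1, s2]
          rw [hv]
        · refine ⟨1, by norm_num, ?_⟩
          have hv : v = ((-1 : ℝ)) • rvec 1 := by funext k; fin_cases k <;> simp [rvec, Zv, R33, a0, a1, s2]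
          rw [hv, Submodule.span_singleton_smul_eq (by norm_num : IsUnit ((-1 : ℝ))) _]
    · rcases m2 with a2|a2
      · rcases (abs_eq (by norm_num : (0:ℝ) ≤ 1)).mp a1 with s1|s1
        · refine ⟨2, by norm_num, ?_⟩
          have hv : v = rvec 2 := by funext k; fin_cases k <;> simp [rvec, Zv, R33, a0, s1, a2]
          rw [hv]
        · refine ⟨2, by norm_num, ?_⟩
          have hv : v = ((-1 : ℝ)) • rvec 2 := by funext k; fin_cases k <;> simp [rvec, Zv, R33, a0, s1, a2]
          rw [hv, Submodule.span_singleton_smul_eq (by norm_num : IsUnit ((-1 : ℝ))) _]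
      · simp only [a0, a1, a2, abs_zero] at hs; norm_num at hs
  · rcases m1 with a1|a1
    · rcases m2 with a2|a2
      · rcases (abs_eq (by norm_num : (0:ℝ) ≤ 1)).mp a0 with s0|s0
        · refine ⟨0, by norm_num, ?_⟩
          have hv : v = rvec 0 := by funext k; fin_cases k <;> simp [rvec, Zv, R33, s0, a1, a2]
          rw [hv]
        · refine ⟨0, by norm_num, ?_⟩
          have hv : v = ((-1 : ℝ)) • rvec 0 := by funext k; fin_cases k <;> simp [rvec, Zv, R33, s0, a1, a2]
          rw [hv, Submodule.span_singleton_smul_eq (by norm_num : IsUnit ((-1 : ℝ))) _]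
      · simp only [a0, a1, a2, abs_zero] at hs; norm_num at hs
    · rcases m2 with a2|a2
      · simp only [a0, a1, a2, abs_zero] at hs; norm_num at hs
      · simp only [a0, a1, a2, abs_zero] at hs; norm_num at hs

set_option maxRecDepth 40000 in
set_option maxHeartbeats 2000000 in
lemma classify011 (v : V3) (ht : absCoords v = ({(0 : ℝ), (1 : ℝ), (1 : ℝ)} : Multiset ℝ)) :
    ∃ i, i < 33 ∧ Submodule.span ℝ {v} = Submodule.span ℝ {rvec i} := by
  have m0 : |v 0| ∈ ({(0 : ℝ), (1 : ℝ), (1 : ℝ)} : Multiset ℝ) := by rw [← ht]; simp [absCoords]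
  have m1 : |v 1| ∈ ({(0 : ℝ), (1 : ℝ), (1 : ℝ)} : Multiset ℝ) := by rw [← ht]; simp [absCoords]
  have m2 : |v 2| ∈ ({(0 : ℝ), (1 : ℝ), (1 : ℝ)} : Multiset ℝ) := by rw [← ht]; simp [absCoords]
  have hs := congrArg Multiset.sum ht
  have hsq := congrArg (fun s => (s.map (fun x => x*x)).sum) ht
  simp [absCoords] at m0 m1 m2 hs hsq
  rcases m0 with a0|a0
  · rcases m1 with a1|a1
    · rcases m2 with a2|a2
      · simp only [a0, a1, a2, abs_zero] at hs; norm_num at hs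
      · simp only [a0, a1, a2, abs_zero] at hs; norm_num at hs
    · rcases m2 with a2|a2
      · simp only [a0, a1, a2, abs_zero] at hs; norm_num at hs
      · rcases (abs_eq (by norm_num : (0:ℝ) ≤ 1)).mp a1 with s1|s1
        · rcases (abs_eq (by norm_num : (0:ℝ) ≤ 1)).mp a2 with s2|s2
          · refine ⟨7, by norm_num, ?_⟩
            have hv : v = rvec 7 := by funext k; fin_cases k <;> simp [rvec, Zv, R33, a0, s1, s2]
            rw [hv]
          · refine ⟨8, by norm_num, ?_⟩
            have hv : v = rvec 8 := by funext k; fin_cases k <;> simp [rvec, Zv, R33, a0, s1, s2]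
            rw [hv]
        · rcases (abs_eq (by norm_num : (0:ℝ) ≤ 1)).mp a2 with s2|s2
          · refine ⟨8, by norm_num, ?_⟩
            have hv : v = ((-1 : ℝ)) • rvec 8 := by funext k; fin_cases k <;> simp [rvec, Zv, R33, a0, s1, s2]
            rw [hv, Submodule.span_singleton_smul_eq (by norm_num : IsUnit ((-1 : ℝ))) _]
          · refine ⟨7, by norm_num, ?_⟩
            have hv : v = ((-1 : ℝ)) • rvec 7 := by funext k; fin_cases k <;> simp [rvec, Zv, R33, a0, s1, s2]
            rw [hv, Submodule.span_singleton_smul_eq (by norm_num : IsUnit ((-1 : ℝ))) _]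
  · rcases m1 with a1|a1
    · rcases m2 with a2|a2
      · simp only [a0, a1, a2, abs_zero] at hs; norm_num at hs
      · rcases (abs_eq (by norm_num : (0:ℝ) ≤ 1)).mp a0 with s0|s0
        · rcases (abs_eq (by norm_num : (0:ℝ) ≤ 1)).mp a2 with s2|s2
          · refine ⟨3, by norm_num, ?_⟩
            have hv : v = rvec 3 := by funext k; fin_cases k <;> simp [rvec, Zv, R33, s0, a1, s2]
            rw [hv]
          · refine ⟨4, by norm_num, ?_⟩
            have hv : v = rvec 4 := by funext k; fin_cases k <;> simp [rvec, Zv, R33, s0, a1, s2]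
            rw [hv]
        · rcases (abs_eq (by norm_num : (0:ℝ) ≤ 1)).mp a2 with s2|s2
          · refine ⟨4, by norm_num, ?_⟩
            have hv : v = ((-1 : ℝ)) • rvec 4 := by funext k; fin_cases k <;> simp [rvec, Zv, R33, s0, a1, s2]
            rw [hv, Submodule.span_singleton_smul_eq (by norm_num : IsUnit ((-1 : ℝ))) _]
          · refine ⟨3, by norm_num, ?_⟩
            have hv : v = ((-1 : ℝ)) • rvec 3 := by funext k; fin_cases k <;> simp [rvec, Zv, R33, s0, a1, s2]
            rw [hv, Submodule.span_singleton_smul_eq (by norm_num : IsUnit ((-1 : ℝ))) _]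
    · rcases m2 with a2|a2
      · rcases (abs_eq (by norm_num : (0:ℝ) ≤ 1)).mp a0 with s0|s0
        · rcases (abs_eq (by norm_num : (0:ℝ) ≤ 1)).mp a1 with s1|s1
          · refine ⟨5, by norm_num, ?_⟩
            have hv : v = rvec 5 := by funext k; fin_cases k <;> simp [rvec, Zv, R33, s0, s1, a2]
            rw [hv]
          · refine ⟨6, by norm_num, ?_⟩
            have hv : v = rvec 6 := by funext k; fin_cases k <;> simp [rvec, Zv, R33, s0, s1, a2]
            rw [hv]
        · rcases (abs_eq (by norm_num : (0:ℝ) ≤ 1)).mp a1 with s1|s1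
          · refine ⟨6, by norm_num, ?_⟩
            have hv : v = ((-1 : ℝ)) • rvec 6 := by funext k; fin_cases k <;> simp [rvec, Zv, R33, s0, s1, a2]
            rw [hv, Submodule.span_singleton_smul_eq (by norm_num : IsUnit ((-1 : ℝ))) _]
          · refine ⟨5, by norm_num, ?_⟩
            have hv : v = ((-1 : ℝ)) • rvec 5 := by funext k; fin_cases k <;> simp [rvec, Zv, R33, s0, s1, a2]
            rw [hv, Submodule.span_singleton_smul_eq (by norm_num : IsUnit ((-1 : ℝ))) _]
      · simp only [a0, a1, a2, abs_zero] at hs; norm_num at hs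

set_option maxRecDepth 40000 in
set_option maxHeartbeats 2000000 in
lemma classify012 (v : V3) (ht : absCoords v = ({(0 : ℝ), (1 : ℝ), (2 : ℝ)} : Multiset ℝ)) :
    ∃ i, i < 33 ∧ Submodule.span ℝ {v} = Submodule.span ℝ {rvec i} := by
  have m0 : |v 0| ∈ ({(0 : ℝ), (1 : ℝ), (2 : ℝ)} : Multiset ℝ) := by rw [← ht]; simp [absCoords]
  have m1 : |v 1| ∈ ({(0 : ℝ), (1 : ℝ), (2 : ℝ)} : Multiset ℝ) := by rw [← ht]; simp [absCoords]
  have m2 : |v 2| ∈ ({(0 : ℝ), (1 : ℝ), (2 : ℝ)} : Multiset ℝ) := by rw [← ht]; simp [absCoords]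
  have hs := congrArg Multiset.sum ht
  have hsq := congrArg (fun s => (s.map (fun x => x*x)).sum) ht
  simp [absCoords] at m0 m1 m2 hs hsq
  rcases m0 with a0|a0|a0
  · rcases m1 with a1|a1|a1
    · rcases m2 with a2|a2|a2
      · simp only [a0, a1, a2, abs_zero] at hs; norm_num at hs
      · simp only [a0, a1, a2, abs_zero] at hs; norm_num at hs
      · simp only [a0, a1, a2, abs_zero] at hs; norm_num at hs
    · rcases m2 with a2|a2|a2
      · simp only [a0, a1, a2, abs_zero] at hs; norm_num at hs
      · simp only [a0, a1, a2, abs_zero] at hs; norm_num at hs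
      · rcases (abs_eq (by norm_num : (0:ℝ) ≤ 1)).mp a1 with s1|s1
        · rcases (abs_eq (by norm_num : (0:ℝ) ≤ 2)).mp a2 with s2|s2
          · refine ⟨17, by norm_num, ?_⟩
            have hv : v = rvec 17 := by funext k; fin_cases k <;> simp [rvec, Zv, R33, a0, s1, s2]
            rw [hv]
          · refine ⟨18, by norm_num, ?_⟩
            have hv : v = rvec 18 := by funext k; fin_cases k <;> simp [rvec, Zv, R33, a0, s1, s2]
            rw [hv]
        · rcases (abs_eq (by norm_num : (0:ℝ) ≤ 2)).mp a2 with s2|s2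
          · refine ⟨18, by norm_num, ?_⟩
            have hv : v = ((-1 : ℝ)) • rvec 18 := by funext k; fin_cases k <;> simp [rvec, Zv, R33, a0, s1, s2]
            rw [hv, Submodule.span_singleton_smul_eq (by norm_num : IsUnit ((-1 : ℝ))) _]
          · refine ⟨17, by norm_num, ?_⟩
            have hv : v = ((-1 : ℝ)) • rvec 17 := by funext k; fin_cases k <;> simp [rvec, Zv, R33, a0, s1, s2]
            rw [hv, Submodule.span_singleton_smul_eq (by norm_num : IsUnit ((-1 : ℝ))) _]
    · rcases m2 with a2|a2|a2
      · simp only [a0, a1, a2, abs_zero] at hs; norm_num at hs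
      · rcases (abs_eq (by norm_num : (0:ℝ) ≤ 2)).mp a1 with s1|s1
        · rcases (abs_eq (by norm_num : (0:ℝ) ≤ 1)).mp a2 with s2|s2
          · refine ⟨9, by norm_num, ?_⟩
            have hv : v = rvec 9 := by funext k; fin_cases k <;> simp [rvec, Zv, R33, a0, s1, s2]
            rw [hv]
          · refine ⟨10, by norm_num, ?_⟩
            have hv : v = rvec 10 := by funext k; fin_cases k <;> simp [rvec, Zv, R33, a0, s1, s2]
            rw [hv]
        · rcases (abs_eq (by norm_num : (0:ℝ) ≤ 1)).mp a2 with s2|s2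
          · refine ⟨10, by norm_num, ?_⟩
            have hv : v = ((-1 : ℝ)) • rvec 10 := by funext k; fin_cases k <;> simp [rvec, Zv, R33, a0, s1, s2]
            rw [hv, Submodule.span_singleton_smul_eq (by norm_num : IsUnit ((-1 : ℝ))) _]
          · refine ⟨9, by norm_num, ?_⟩
            have hv : v = ((-1 : ℝ)) • rvec 9 := by funext k; fin_cases k <;> simp [rvec, Zv, R33, a0, s1, s2]
            rw [hv, Submodule.span_singleton_smul_eq (by norm_num : IsUnit ((-1 : ℝ))) _]
      · simp only [a0, a1, a2, abs_zero] at hs; norm_num at hs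
  · rcases m1 with a1|a1|a1
    · rcases m2 with a2|a2|a2
      · simp only [a0, a1, a2, abs_zero] at hs; norm_num at hs
      · simp only [a0, a1, a2, abs_zero] at hs; norm_num at hs
      · rcases (abs_eq (by norm_num : (0:ℝ) ≤ 1)).mp a0 with s0|s0
        · rcases (abs_eq (by norm_num : (0:ℝ) ≤ 2)).mp a2 with s2|s2
          · refine ⟨19, by norm_num, ?_⟩
            have hv : v = rvec 19 := by funext k; fin_cases k <;> simp [rvec, Zv, R33, s0, a1, s2]
            rw [hv]
          · refine ⟨20, by norm_num, ?_⟩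
            have hv : v = rvec 20 := by funext k; fin_cases k <;> simp [rvec, Zv, R33, s0, a1, s2]
            rw [hv]
        · rcases (abs_eq (by norm_num : (0:ℝ) ≤ 2)).mp a2 with s2|s2
          · refine ⟨20, by norm_num, ?_⟩
            have hv : v = ((-1 : ℝ)) • rvec 20 := by funext k; fin_cases k <;> simp [rvec, Zv, R33, s0, a1, s2]
            rw [hv, Submodule.span_singleton_smul_eq (by norm_num : IsUnit ((-1 : ℝ))) _]
          · refine ⟨19, by norm_num, ?_⟩
            have hv : v = ((-1 : ℝ)) • rvec 19 := by funext k; fin_cases k <;> simp [rvec, Zv, R33, s0, a1, s2]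
            rw [hv, Submodule.span_singleton_smul_eq (by norm_num : IsUnit ((-1 : ℝ))) _]
    · rcases m2 with a2|a2|a2
      · simp only [a0, a1, a2, abs_zero] at hs; norm_num at hs
      · have q0 : v 0 * v 0 = (1 : ℝ) := by rw [← abs_mul_abs_self, a0]; norm_num
        have q1 : v 1 * v 1 = (1 : ℝ) := by rw [← abs_mul_abs_self, a1]; norm_num
        have q2 : v 2 * v 2 = (1 : ℝ) := by rw [← abs_mul_abs_self, a2]; norm_num
        rw [q0, q1, q2] at hsq; norm_num at hsq
      · simp only [a0, a1, a2, abs_zero] at hs; norm_num at hs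
    · rcases m2 with a2|a2|a2
      · rcases (abs_eq (by norm_num : (0:ℝ) ≤ 1)).mp a0 with s0|s0
        · rcases (abs_eq (by norm_num : (0:ℝ) ≤ 2)).mp a1 with s1|s1
          · refine ⟨11, by norm_num, ?_⟩
            have hv : v = rvec 11 := by funext k; fin_cases k <;> simp [rvec, Zv, R33, s0, s1, a2]
            rw [hv]
          · refine ⟨12, by norm_num, ?_⟩
            have hv : v = rvec 12 := by funext k; fin_cases k <;> simp [rvec, Zv, R33, s0, s1, a2]
            rw [hv]
        · rcases (abs_eq (by norm_num : (0:ℝ) ≤ 2)).mp a1 with s1|s1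
          · refine ⟨12, by norm_num, ?_⟩
            have hv : v = ((-1 : ℝ)) • rvec 12 := by funext k; fin_cases k <;> simp [rvec, Zv, R33, s0, s1, a2]
            rw [hv, Submodule.span_singleton_smul_eq (by norm_num : IsUnit ((-1 : ℝ))) _]
          · refine ⟨11, by norm_num, ?_⟩
            have hv : v = ((-1 : ℝ)) • rvec 11 := by funext k; fin_cases k <;> simp [rvec, Zv, R33, s0, s1, a2]
            rw [hv, Submodule.span_singleton_smul_eq (by norm_num : IsUnit ((-1 : ℝ))) _]
      · simp only [a0, a1, a2, abs_zero] at hs; norm_num at hs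
      · simp only [a0, a1, a2, abs_zero] at hs; norm_num at hs
  · rcases m1 with a1|a1|a1
    · rcases m2 with a2|a2|a2
      · simp only [a0, a1, a2, abs_zero] at hs; norm_num at hs
      · rcases (abs_eq (by norm_num : (0:ℝ) ≤ 2)).mp a0 with s0|s0
        · rcases (abs_eq (by norm_num : (0:ℝ) ≤ 1)).mp a2 with s2|s2
          · refine ⟨15, by norm_num, ?_⟩
            have hv : v = rvec 15 := by funext k; fin_cases k <;> simp [rvec, Zv, R33, s0, a1, s2]
            rw [hv]
          · refine ⟨16, by norm_num, ?_⟩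
            have hv : v = rvec 16 := by funext k; fin_cases k <;> simp [rvec, Zv, R33, s0, a1, s2]
            rw [hv]
        · rcases (abs_eq (by norm_num : (0:ℝ) ≤ 1)).mp a2 with s2|s2
          · refine ⟨16, by norm_num, ?_⟩
            have hv : v = ((-1 : ℝ)) • rvec 16 := by funext k; fin_cases k <;> simp [rvec, Zv, R33, s0, a1, s2]
            rw [hv, Submodule.span_singleton_smul_eq (by norm_num : IsUnit ((-1 : ℝ))) _]
          · refine ⟨15, by norm_num, ?_⟩
            have hv : v = ((-1 : ℝ)) • rvec 15 := by funext k; fin_cases k <;> simp [rvec, Zv, R33, s0, a1, s2]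
            rw [hv, Submodule.span_singleton_smul_eq (by norm_num : IsUnit ((-1 : ℝ))) _]
      · simp only [a0, a1, a2, abs_zero] at hs; norm_num at hs
    · rcases m2 with a2|a2|a2
      · rcases (abs_eq (by norm_num : (0:ℝ) ≤ 2)).mp a0 with s0|s0
        · rcases (abs_eq (by norm_num : (0:ℝ) ≤ 1)).mp a1 with s1|s1
          · refine ⟨13, by norm_num, ?_⟩
            have hv : v = rvec 13 := by funext k; fin_cases k <;> simp [rvec, Zv, R33, s0, s1, a2]
            rw [hv]
          · refine ⟨14, by norm_num, ?_⟩
            have hv : v = rvec 14 := by funext k; fin_cases k <;> simp [rvec, Zv, R33, s0, s1, a2]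
            rw [hv]
        · rcases (abs_eq (by norm_num : (0:ℝ) ≤ 1)).mp a1 with s1|s1
          · refine ⟨14, by norm_num, ?_⟩
            have hv : v = ((-1 : ℝ)) • rvec 14 := by funext k; fin_cases k <;> simp [rvec, Zv, R33, s0, s1, a2]
            rw [hv, Submodule.span_singleton_smul_eq (by norm_num : IsUnit ((-1 : ℝ))) _]
          · refine ⟨13, by norm_num, ?_⟩
            have hv : v = ((-1 : ℝ)) • rvec 13 := by funext k; fin_cases k <;> simp [rvec, Zv, R33, s0, s1, a2]
            rw [hv, Submodule.span_singleton_smul_eq (by norm_num : IsUnit ((-1 : ℝ))) _]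
      · simp only [a0, a1, a2, abs_zero] at hs; norm_num at hs
      · simp only [a0, a1, a2, abs_zero] at hs; norm_num at hs
    · rcases m2 with a2|a2|a2
      · simp only [a0, a1, a2, abs_zero] at hs; norm_num at hs
      · simp only [a0, a1, a2, abs_zero] at hs; norm_num at hs
      · simp only [a0, a1, a2, abs_zero] at hs; norm_num at hs

set_option maxRecDepth 40000 in
set_option maxHeartbeats 2000000 in
lemma classify112 (v : V3) (ht : absCoords v = ({(1 : ℝ), (1 : ℝ), (2 : ℝ)} : Multiset ℝ)) :
    ∃ i, i < 33 ∧ Submodule.span ℝ {v} = Submodule.span ℝ {rvec i} := by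
  have m0 : |v 0| ∈ ({(1 : ℝ), (1 : ℝ), (2 : ℝ)} : Multiset ℝ) := by rw [← ht]; simp [absCoords]
  have m1 : |v 1| ∈ ({(1 : ℝ), (1 : ℝ), (2 : ℝ)} : Multiset ℝ) := by rw [← ht]; simp [absCoords]
  have m2 : |v 2| ∈ ({(1 : ℝ), (1 : ℝ), (2 : ℝ)} : Multiset ℝ) := by rw [← ht]; simp [absCoords]
  have hs := congrArg Multiset.sum ht
  have hsq := congrArg (fun s => (s.map (fun x => x*x)).sum) ht
  simp [absCoords] at m0 m1 m2 hs hsq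
  rcases m0 with a0|a0
  · rcases m1 with a1|a1
    · rcases m2 with a2|a2
      · simp only [a0, a1, a2, abs_zero] at hs; norm_num at hs
      · rcases (abs_eq (by norm_num : (0:ℝ) ≤ 1)).mp a0 with s0|s0
        · rcases (abs_eq (by norm_num : (0:ℝ) ≤ 1)).mp a1 with s1|s1
          · rcases (abs_eq (by norm_num : (0:ℝ) ≤ 2)).mp a2 with s2|s2
            · refine ⟨29, by norm_num, ?_⟩
              have hv : v = rvec 29 := by funext k; fin_cases k <;> simp [rvec, Zv, R33, s0, s1, s2]
              rw [hv]
            · refine ⟨30, by norm_num, ?_⟩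
              have hv : v = rvec 30 := by funext k; fin_cases k <;> simp [rvec, Zv, R33, s0, s1, s2]
              rw [hv]
          · rcases (abs_eq (by norm_num : (0:ℝ) ≤ 2)).mp a2 with s2|s2
            · refine ⟨31, by norm_num, ?_⟩
              have hv : v = rvec 31 := by funext k; fin_cases k <;> simp [rvec, Zv, R33, s0, s1, s2]
              rw [hv]
            · refine ⟨32, by norm_num, ?_⟩
              have hv : v = rvec 32 := by funext k; fin_cases k <;> simp [rvec, Zv, R33, s0, s1, s2]
              rw [hv]
        · rcases (abs_eq (by norm_num : (0:ℝ) ≤ 1)).mp a1 with s1|s1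
          · rcases (abs_eq (by norm_num : (0:ℝ) ≤ 2)).mp a2 with s2|s2
            · refine ⟨32, by norm_num, ?_⟩
              have hv : v = ((-1 : ℝ)) • rvec 32 := by funext k; fin_cases k <;> simp [rvec, Zv, R33, s0, s1, s2]
              rw [hv, Submodule.span_singleton_smul_eq (by norm_num : IsUnit ((-1 : ℝ))) _]
            · refine ⟨31, by norm_num, ?_⟩
              have hv : v = ((-1 : ℝ)) • rvec 31 := by funext k; fin_cases k <;> simp [rvec, Zv, R33, s0, s1, s2]
              rw [hv, Submodule.span_singleton_smul_eq (by norm_num : IsUnit ((-1 : ℝ))) _]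
          · rcases (abs_eq (by norm_num : (0:ℝ) ≤ 2)).mp a2 with s2|s2
            · refine ⟨30, by norm_num, ?_⟩
              have hv : v = ((-1 : ℝ)) • rvec 30 := by funext k; fin_cases k <;> simp [rvec, Zv, R33, s0, s1, s2]
              rw [hv, Submodule.span_singleton_smul_eq (by norm_num : IsUnit ((-1 : ℝ))) _]
            · refine ⟨29, by norm_num, ?_⟩
              have hv : v = ((-1 : ℝ)) • rvec 29 := by funext k; fin_cases k <;> simp [rvec, Zv, R33, s0, s1, s2]
              rw [hv, Submodule.span_singleton_smul_eq (by norm_num : IsUnit ((-1 : ℝ))) _]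
    · rcases m2 with a2|a2
      · rcases (abs_eq (by norm_num : (0:ℝ) ≤ 1)).mp a0 with s0|s0
        · rcases (abs_eq (by norm_num : (0:ℝ) ≤ 2)).mp a1 with s1|s1
          · rcases (abs_eq (by norm_num : (0:ℝ) ≤ 1)).mp a2 with s2|s2
            · refine ⟨21, by norm_num, ?_⟩
              have hv : v = rvec 21 := by funext k; fin_cases k <;> simp [rvec, Zv, R33, s0, s1, s2]
              rw [hv]
            · refine ⟨22, by norm_num, ?_⟩
              have hv : v = rvec 22 := by funext k; fin_cases k <;> simp [rvec, Zv, R33, s0, s1, s2]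
              rw [hv]
          · rcases (abs_eq (by norm_num : (0:ℝ) ≤ 1)).mp a2 with s2|s2
            · refine ⟨23, by norm_num, ?_⟩
              have hv : v = rvec 23 := by funext k; fin_cases k <;> simp [rvec, Zv, R33, s0, s1, s2]
              rw [hv]
            · refine ⟨24, by norm_num, ?_⟩
              have hv : v = rvec 24 := by funext k; fin_cases k <;> simp [rvec, Zv, R33, s0, s1, s2]
              rw [hv]
        · rcases (abs_eq (by norm_num : (0:ℝ) ≤ 2)).mp a1 with s1|s1
          · rcases (abs_eq (by norm_num : (0:ℝ) ≤ 1)).mp a2 with s2|s2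
            · refine ⟨24, by norm_num, ?_⟩
              have hv : v = ((-1 : ℝ)) • rvec 24 := by funext k; fin_cases k <;> simp [rvec, Zv, R33, s0, s1, s2]
              rw [hv, Submodule.span_singleton_smul_eq (by norm_num : IsUnit ((-1 : ℝ))) _]
            · refine ⟨23, by norm_num, ?_⟩
              have hv : v = ((-1 : ℝ)) • rvec 23 := by funext k; fin_cases k <;> simp [rvec, Zv, R33, s0, s1, s2]
              rw [hv, Submodule.span_singleton_smul_eq (by norm_num : IsUnit ((-1 : ℝ))) _]
          · rcases (abs_eq (by norm_num : (0:ℝ) ≤ 1)).mp a2 with s2|s2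
            · refine ⟨22, by norm_num, ?_⟩
              have hv : v = ((-1 : ℝ)) • rvec 22 := by funext k; fin_cases k <;> simp [rvec, Zv, R33, s0, s1, s2]
              rw [hv, Submodule.span_singleton_smul_eq (by norm_num : IsUnit ((-1 : ℝ))) _]
            · refine ⟨21, by norm_num, ?_⟩
              have hv : v = ((-1 : ℝ)) • rvec 21 := by funext k; fin_cases k <;> simp [rvec, Zv, R33, s0, s1, s2]
              rw [hv, Submodule.span_singleton_smul_eq (by norm_num : IsUnit ((-1 : ℝ))) _]
      · simp only [a0, a1, a2, abs_zero] at hs; norm_num at hs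
  · rcases m1 with a1|a1
    · rcases m2 with a2|a2
      · rcases (abs_eq (by norm_num : (0:ℝ) ≤ 2)).mp a0 with s0|s0
        · rcases (abs_eq (by norm_num : (0:ℝ) ≤ 1)).mp a1 with s1|s1
          · rcases (abs_eq (by norm_num : (0:ℝ) ≤ 1)).mp a2 with s2|s2
            · refine ⟨25, by norm_num, ?_⟩
              have hv : v = rvec 25 := by funext k; fin_cases k <;> simp [rvec, Zv, R33, s0, s1, s2]
              rw [hv]
            · refine ⟨26, by norm_num, ?_⟩
              have hv : v = rvec 26 := by funext k; fin_cases k <;> simp [rvec, Zv, R33, s0, s1, s2]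
              rw [hv]
          · rcases (abs_eq (by norm_num : (0:ℝ) ≤ 1)).mp a2 with s2|s2
            · refine ⟨27, by norm_num, ?_⟩
              have hv : v = rvec 27 := by funext k; fin_cases k <;> simp [rvec, Zv, R33, s0, s1, s2]
              rw [hv]
            · refine ⟨28, by norm_num, ?_⟩
              have hv : v = rvec 28 := by funext k; fin_cases k <;> simp [rvec, Zv, R33, s0, s1, s2]
              rw [hv]
        · rcases (abs_eq (by norm_num : (0:ℝ) ≤ 1)).mp a1 with s1|s1
          · rcases (abs_eq (by norm_num : (0:ℝ) ≤ 1)).mp a2 with s2|s2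
            · refine ⟨28, by norm_num, ?_⟩
              have hv : v = ((-1 : ℝ)) • rvec 28 := by funext k; fin_cases k <;> simp [rvec, Zv, R33, s0, s1, s2]
              rw [hv, Submodule.span_singleton_smul_eq (by norm_num : IsUnit ((-1 : ℝ))) _]
            · refine ⟨27, by norm_num, ?_⟩
              have hv : v = ((-1 : ℝ)) • rvec 27 := by funext k; fin_cases k <;> simp [rvec, Zv, R33, s0, s1, s2]
              rw [hv, Submodule.span_singleton_smul_eq (by norm_num : IsUnit ((-1 : ℝ))) _]
          · rcases (abs_eq (by norm_num : (0:ℝ) ≤ 1)).mp a2 with s2|s2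
            · refine ⟨26, by norm_num, ?_⟩
              have hv : v = ((-1 : ℝ)) • rvec 26 := by funext k; fin_cases k <;> simp [rvec, Zv, R33, s0, s1, s2]
              rw [hv, Submodule.span_singleton_smul_eq (by norm_num : IsUnit ((-1 : ℝ))) _]
            · refine ⟨25, by norm_num, ?_⟩
              have hv : v = ((-1 : ℝ)) • rvec 25 := by funext k; fin_cases k <;> simp [rvec, Zv, R33, s0, s1, s2]
              rw [hv, Submodule.span_singleton_smul_eq (by norm_num : IsUnit ((-1 : ℝ))) _]
      · simp only [a0, a1, a2, abs_zero] at hs; norm_num at hs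
    · rcases m2 with a2|a2
      · simp only [a0, a1, a2, abs_zero] at hs; norm_num at hs
      · simp only [a0, a1, a2, abs_zero] at hs; norm_num at hs

lemma classify (L : Submodule ℝ V3) (hL : L ∈ PeresSet) :
    ∃ i, i < 33 ∧ L = Submodule.span ℝ {rvec i} := by
  obtain ⟨v, hv0, rfl, htype⟩ := hL
  rcases htype with ht|ht|ht|ht
  · exact classify001 v ht
  · exact classify011 v ht
  · exact classify012 v ht
  · exact classify112 v ht

lemma PSmem : ∀ j, j < 33 → Submodule.span ℝ {rvec j} ∈ PeresSet := by
  intro j hj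
  interval_cases j
  · refine ⟨rvec 0, ?_, rfl, Or.inl (by
      have hms : absCoords (rvec 0) = ({(1 : ℝ), (0 : ℝ), (0 : ℝ)} : Multiset ℝ) := by norm_num [absCoords, rvec, Zv, R33]
      rw [hms, ms_swap12 (1 : ℝ) (0 : ℝ) (0 : ℝ), ms_swap23 (0 : ℝ) (1 : ℝ) (0 : ℝ)])⟩
    intro h
    have hc := congrFun h (0 : Fin 3)
    norm_num [rvec, Zv, R33] at hc
  · refine ⟨rvec 1, ?_, rfl, Or.inl (by
      have hms : absCoords (rvec 1) = ({(0 : ℝ), (0 : ℝ), (1 : ℝ)} : Multiset ℝ) := by norm_num [absCoords, rvec, Zv, R33]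
      rw [hms])⟩
    intro h
    have hc := congrFun h (2 : Fin 3)
    norm_num [rvec, Zv, R33] at hc
  · refine ⟨rvec 2, ?_, rfl, Or.inl (by
      have hms : absCoords (rvec 2) = ({(0 : ℝ), (1 : ℝ), (0 : ℝ)} : Multiset ℝ) := by norm_num [absCoords, rvec, Zv, R33]
      rw [hms, ms_swap23 (0 : ℝ) (1 : ℝ) (0 : ℝ)])⟩
    intro h
    have hc := congrFun h (1 : Fin 3)
    norm_num [rvec, Zv, R33] at hc
  · refine ⟨rvec 3, ?_, rfl, Or.inr (Or.inl (by
      have hms : absCoords (rvec 3) = ({(1 : ℝ), (0 : ℝ), (1 : ℝ)} : Multiset ℝ) := by norm_num [absCoords, rvec, Zv, R33]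
      rw [hms, ms_swap12 (1 : ℝ) (0 : ℝ) (1 : ℝ)]))⟩
    intro h
    have hc := congrFun h (0 : Fin 3)
    norm_num [rvec, Zv, R33] at hc
  · refine ⟨rvec 4, ?_, rfl, Or.inr (Or.inl (by
      have hms : absCoords (rvec 4) = ({(1 : ℝ), (0 : ℝ), (1 : ℝ)} : Multiset ℝ) := by norm_num [absCoords, rvec, Zv, R33]
      rw [hms, ms_swap12 (1 : ℝ) (0 : ℝ) (1 : ℝ)]))⟩
    intro h
    have hc := congrFun h (0 : Fin 3)
    norm_num [rvec, Zv, R33] at hc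
  · refine ⟨rvec 5, ?_, rfl, Or.inr (Or.inl (by
      have hms : absCoords (rvec 5) = ({(1 : ℝ), (1 : ℝ), (0 : ℝ)} : Multiset ℝ) := by norm_num [absCoords, rvec, Zv, R33]
      rw [hms, ms_swap23 (1 : ℝ) (1 : ℝ) (0 : ℝ), ms_swap12 (1 : ℝ) (0 : ℝ) (1 : ℝ)]))⟩
    intro h
    have hc := congrFun h (0 : Fin 3)
    norm_num [rvec, Zv, R33] at hc
  · refine ⟨rvec 6, ?_, rfl, Or.inr (Or.inl (by
      have hms : absCoords (rvec 6) = ({(1 : ℝ), (1 : ℝ), (0 : ℝ)} : Multiset ℝ) := by norm_num [absCoords, rvec, Zv, R33]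
      rw [hms, ms_swap23 (1 : ℝ) (1 : ℝ) (0 : ℝ), ms_swap12 (1 : ℝ) (0 : ℝ) (1 : ℝ)]))⟩
    intro h
    have hc := congrFun h (0 : Fin 3)
    norm_num [rvec, Zv, R33] at hc
  · refine ⟨rvec 7, ?_, rfl, Or.inr (Or.inl (by
      have hms : absCoords (rvec 7) = ({(0 : ℝ), (1 : ℝ), (1 : ℝ)} : Multiset ℝ) := by norm_num [absCoords, rvec, Zv, R33]
      rw [hms]))⟩
    intro h
    have hc := congrFun h (1 : Fin 3)
    norm_num [rvec, Zv, R33] at hc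
  · refine ⟨rvec 8, ?_, rfl, Or.inr (Or.inl (by
      have hms : absCoords (rvec 8) = ({(0 : ℝ), (1 : ℝ), (1 : ℝ)} : Multiset ℝ) := by norm_num [absCoords, rvec, Zv, R33]
      rw [hms]))⟩
    intro h
    have hc := congrFun h (1 : Fin 3)
    norm_num [rvec, Zv, R33] at hc
  · refine ⟨rvec 9, ?_, rfl, Or.inr (Or.inr (Or.inl (by
      have hms : absCoords (rvec 9) = ({(0 : ℝ), (2 : ℝ), (1 : ℝ)} : Multiset ℝ) := by norm_num [absCoords, rvec, Zv, R33]
      rw [hms, ms_swap23 (0 : ℝ) (2 : ℝ) (1 : ℝ)])))⟩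
    intro h
    have hc := congrFun h (1 : Fin 3)
    norm_num [rvec, Zv, R33] at hc
  · refine ⟨rvec 10, ?_, rfl, Or.inr (Or.inr (Or.inl (by
      have hms : absCoords (rvec 10) = ({(0 : ℝ), (2 : ℝ), (1 : ℝ)} : Multiset ℝ) := by norm_num [absCoords, rvec, Zv, R33]
      rw [hms, ms_swap23 (0 : ℝ) (2 : ℝ) (1 : ℝ)])))⟩
    intro h
    have hc := congrFun h (1 : Fin 3)
    norm_num [rvec, Zv, R33] at hc
  · refine ⟨rvec 11, ?_, rfl, Or.inr (Or.inr (Or.inl (by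
      have hms : absCoords (rvec 11) = ({(1 : ℝ), (2 : ℝ), (0 : ℝ)} : Multiset ℝ) := by norm_num [absCoords, rvec, Zv, R33]
      rw [hms, ms_swap23 (1 : ℝ) (2 : ℝ) (0 : ℝ), ms_swap12 (1 : ℝ) (0 : ℝ) (2 : ℝ)])))⟩
    intro h
    have hc := congrFun h (0 : Fin 3)
    norm_num [rvec, Zv, R33] at hc
  · refine ⟨rvec 12, ?_, rfl, Or.inr (Or.inr (Or.inl (by
      have hms : absCoords (rvec 12) = ({(1 : ℝ), (2 : ℝ), (0 : ℝ)} : Multiset ℝ) := by norm_num [absCoords, rvec, Zv, R33]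
      rw [hms, ms_swap23 (1 : ℝ) (2 : ℝ) (0 : ℝ), ms_swap12 (1 : ℝ) (0 : ℝ) (2 : ℝ)])))⟩
    intro h
    have hc := congrFun h (0 : Fin 3)
    norm_num [rvec, Zv, R33] at hc
  · refine ⟨rvec 13, ?_, rfl, Or.inr (Or.inr (Or.inl (by
      have hms : absCoords (rvec 13) = ({(2 : ℝ), (1 : ℝ), (0 : ℝ)} : Multiset ℝ) := by norm_num [absCoords, rvec, Zv, R33]
      rw [hms, ms_swap12 (2 : ℝ) (1 : ℝ) (0 : ℝ), ms_swap23 (1 : ℝ) (2 : ℝ) (0 : ℝ), ms_swap12 (1 : ℝ) (0 : ℝ) (2 : ℝ)])))⟩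
    intro h
    have hc := congrFun h (0 : Fin 3)
    norm_num [rvec, Zv, R33] at hc
  · refine ⟨rvec 14, ?_, rfl, Or.inr (Or.inr (Or.inl (by
      have hms : absCoords (rvec 14) = ({(2 : ℝ), (1 : ℝ), (0 : ℝ)} : Multiset ℝ) := by norm_num [absCoords, rvec, Zv, R33]
      rw [hms, ms_swap12 (2 : ℝ) (1 : ℝ) (0 : ℝ), ms_swap23 (1 : ℝ) (2 : ℝ) (0 : ℝ), ms_swap12 (1 : ℝ) (0 : ℝ) (2 : ℝ)])))⟩
    intro h
    have hc := congrFun h (0 : Fin 3)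
    norm_num [rvec, Zv, R33] at hc
  · refine ⟨rvec 15, ?_, rfl, Or.inr (Or.inr (Or.inl (by
      have hms : absCoords (rvec 15) = ({(2 : ℝ), (0 : ℝ), (1 : ℝ)} : Multiset ℝ) := by norm_num [absCoords, rvec, Zv, R33]
      rw [hms, ms_swap12 (2 : ℝ) (0 : ℝ) (1 : ℝ), ms_swap23 (0 : ℝ) (2 : ℝ) (1 : ℝ)])))⟩
    intro h
    have hc := congrFun h (0 : Fin 3)
    norm_num [rvec, Zv, R33] at hc
  · refine ⟨rvec 16, ?_, rfl, Or.inr (Or.inr (Or.inl (by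
      have hms : absCoords (rvec 16) = ({(2 : ℝ), (0 : ℝ), (1 : ℝ)} : Multiset ℝ) := by norm_num [absCoords, rvec, Zv, R33]
      rw [hms, ms_swap12 (2 : ℝ) (0 : ℝ) (1 : ℝ), ms_swap23 (0 : ℝ) (2 : ℝ) (1 : ℝ)])))⟩
    intro h
    have hc := congrFun h (0 : Fin 3)
    norm_num [rvec, Zv, R33] at hc
  · refine ⟨rvec 17, ?_, rfl, Or.inr (Or.inr (Or.inl (by
      have hms : absCoords (rvec 17) = ({(0 : ℝ), (1 : ℝ), (2 : ℝ)} : Multiset ℝ) := by norm_num [absCoords, rvec, Zv, R33]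
      rw [hms])))⟩
    intro h
    have hc := congrFun h (1 : Fin 3)
    norm_num [rvec, Zv, R33] at hc
  · refine ⟨rvec 18, ?_, rfl, Or.inr (Or.inr (Or.inl (by
      have hms : absCoords (rvec 18) = ({(0 : ℝ), (1 : ℝ), (2 : ℝ)} : Multiset ℝ) := by norm_num [absCoords, rvec, Zv, R33]
      rw [hms])))⟩
    intro h
    have hc := congrFun h (1 : Fin 3)
    norm_num [rvec, Zv, R33] at hc
  · refine ⟨rvec 19, ?_, rfl, Or.inr (Or.inr (Or.inl (by
      have hms : absCoords (rvec 19) = ({(1 : ℝ), (0 : ℝ), (2 : ℝ)} : Multiset ℝ) := by norm_num [absCoords, rvec, Zv, R33]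
      rw [hms, ms_swap12 (1 : ℝ) (0 : ℝ) (2 : ℝ)])))⟩
    intro h
    have hc := congrFun h (0 : Fin 3)
    norm_num [rvec, Zv, R33] at hc
  · refine ⟨rvec 20, ?_, rfl, Or.inr (Or.inr (Or.inl (by
      have hms : absCoords (rvec 20) = ({(1 : ℝ), (0 : ℝ), (2 : ℝ)} : Multiset ℝ) := by norm_num [absCoords, rvec, Zv, R33]
      rw [hms, ms_swap12 (1 : ℝ) (0 : ℝ) (2 : ℝ)])))⟩
    intro h
    have hc := congrFun h (0 : Fin 3)
    norm_num [rvec, Zv, R33] at hc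
  · refine ⟨rvec 21, ?_, rfl, Or.inr (Or.inr (Or.inr (by
      have hms : absCoords (rvec 21) = ({(1 : ℝ), (2 : ℝ), (1 : ℝ)} : Multiset ℝ) := by norm_num [absCoords, rvec, Zv, R33]
      rw [hms, ms_swap23 (1 : ℝ) (2 : ℝ) (1 : ℝ)])))⟩
    intro h
    have hc := congrFun h (0 : Fin 3)
    norm_num [rvec, Zv, R33] at hc
  · refine ⟨rvec 22, ?_, rfl, Or.inr (Or.inr (Or.inr (by
      have hms : absCoords (rvec 22) = ({(1 : ℝ), (2 : ℝ), (1 : ℝ)} : Multiset ℝ) := by norm_num [absCoords, rvec, Zv, R33]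
      rw [hms, ms_swap23 (1 : ℝ) (2 : ℝ) (1 : ℝ)])))⟩
    intro h
    have hc := congrFun h (0 : Fin 3)
    norm_num [rvec, Zv, R33] at hc
  · refine ⟨rvec 23, ?_, rfl, Or.inr (Or.inr (Or.inr (by
      have hms : absCoords (rvec 23) = ({(1 : ℝ), (2 : ℝ), (1 : ℝ)} : Multiset ℝ) := by norm_num [absCoords, rvec, Zv, R33]
      rw [hms, ms_swap23 (1 : ℝ) (2 : ℝ) (1 : ℝ)])))⟩
    intro h
    have hc := congrFun h (0 : Fin 3)
    norm_num [rvec, Zv, R33] at hc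
  · refine ⟨rvec 24, ?_, rfl, Or.inr (Or.inr (Or.inr (by
      have hms : absCoords (rvec 24) = ({(1 : ℝ), (2 : ℝ), (1 : ℝ)} : Multiset ℝ) := by norm_num [absCoords, rvec, Zv, R33]
      rw [hms, ms_swap23 (1 : ℝ) (2 : ℝ) (1 : ℝ)])))⟩
    intro h
    have hc := congrFun h (0 : Fin 3)
    norm_num [rvec, Zv, R33] at hc
  · refine ⟨rvec 25, ?_, rfl, Or.inr (Or.inr (Or.inr (by
      have hms : absCoords (rvec 25) = ({(2 : ℝ), (1 : ℝ), (1 : ℝ)} : Multiset ℝ) := by norm_num [absCoords, rvec, Zv, R33]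
      rw [hms, ms_swap12 (2 : ℝ) (1 : ℝ) (1 : ℝ), ms_swap23 (1 : ℝ) (2 : ℝ) (1 : ℝ)])))⟩
    intro h
    have hc := congrFun h (0 : Fin 3)
    norm_num [rvec, Zv, R33] at hc
  · refine ⟨rvec 26, ?_, rfl, Or.inr (Or.inr (Or.inr (by
      have hms : absCoords (rvec 26) = ({(2 : ℝ), (1 : ℝ), (1 : ℝ)} : Multiset ℝ) := by norm_num [absCoords, rvec, Zv, R33]
      rw [hms, ms_swap12 (2 : ℝ) (1 : ℝ) (1 : ℝ), ms_swap23 (1 : ℝ) (2 : ℝ) (1 : ℝ)])))⟩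
    intro h
    have hc := congrFun h (0 : Fin 3)
    norm_num [rvec, Zv, R33] at hc
  · refine ⟨rvec 27, ?_, rfl, Or.inr (Or.inr (Or.inr (by
      have hms : absCoords (rvec 27) = ({(2 : ℝ), (1 : ℝ), (1 : ℝ)} : Multiset ℝ) := by norm_num [absCoords, rvec, Zv, R33]
      rw [hms, ms_swap12 (2 : ℝ) (1 : ℝ) (1 : ℝ), ms_swap23 (1 : ℝ) (2 : ℝ) (1 : ℝ)])))⟩
    intro h
    have hc := congrFun h (0 : Fin 3)
    norm_num [rvec, Zv, R33] at hc
  · refine ⟨rvec 28, ?_, rfl, Or.inr (Or.inr (Or.inr (by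
      have hms : absCoords (rvec 28) = ({(2 : ℝ), (1 : ℝ), (1 : ℝ)} : Multiset ℝ) := by norm_num [absCoords, rvec, Zv, R33]
      rw [hms, ms_swap12 (2 : ℝ) (1 : ℝ) (1 : ℝ), ms_swap23 (1 : ℝ) (2 : ℝ) (1 : ℝ)])))⟩
    intro h
    have hc := congrFun h (0 : Fin 3)
    norm_num [rvec, Zv, R33] at hc
  · refine ⟨rvec 29, ?_, rfl, Or.inr (Or.inr (Or.inr (by
      have hms : absCoords (rvec 29) = ({(1 : ℝ), (1 : ℝ), (2 : ℝ)} : Multiset ℝ) := by norm_num [absCoords, rvec, Zv, R33]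
      rw [hms])))⟩
    intro h
    have hc := congrFun h (0 : Fin 3)
    norm_num [rvec, Zv, R33] at hc
  · refine ⟨rvec 30, ?_, rfl, Or.inr (Or.inr (Or.inr (by
      have hms : absCoords (rvec 30) = ({(1 : ℝ), (1 : ℝ), (2 : ℝ)} : Multiset ℝ) := by norm_num [absCoords, rvec, Zv, R33]
      rw [hms])))⟩
    intro h
    have hc := congrFun h (0 : Fin 3)
    norm_num [rvec, Zv, R33] at hc
  · refine ⟨rvec 31, ?_, rfl, Or.inr (Or.inr (Or.inr (by
      have hms : absCoords (rvec 31) = ({(1 : ℝ), (1 : ℝ), (2 : ℝ)} : Multiset ℝ) := by norm_num [absCoords, rvec, Zv, R33]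
      rw [hms])))⟩
    intro h
    have hc := congrFun h (0 : Fin 3)
    norm_num [rvec, Zv, R33] at hc
  · refine ⟨rvec 32, ?_, rfl, Or.inr (Or.inr (Or.inr (by
      have hms : absCoords (rvec 32) = ({(1 : ℝ), (1 : ℝ), (2 : ℝ)} : Multiset ℝ) := by norm_num [absCoords, rvec, Zv, R33]
      rw [hms])))⟩
    intro h
    have hc := congrFun h (0 : Fin 3)
    norm_num [rvec, Zv, R33] at hc

lemma span_inj {i j : ℕ} (hi : i < 33) (hj : j < 33)
    (h : Submodule.span ℝ {rvec i} = Submodule.span ℝ {rvec j}) : i = j := by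
  have hm : rvec i ∈ Submodule.span ℝ {rvec j} := h ▸ Submodule.mem_span_singleton_self _
  obtain ⟨a, ha⟩ := Submodule.mem_span_singleton.mp hm
  have e0 : a * ((Zv j 0 : ℤ) : ℝ) = ((Zv i 0 : ℤ) : ℝ) := by
    have h0 := congrFun ha (0 : Fin 3)
    simpa [rvec, Fin.val_zero] using h0
  have e1 : a * ((Zv j 1 : ℤ) : ℝ) = ((Zv i 1 : ℤ) : ℝ) := by
    have h1 := congrFun ha (1 : Fin 3)
    simpa [rvec, Fin.val_one] using h1
  have e2 : a * ((Zv j 2 : ℤ) : ℝ) = ((Zv i 2 : ℤ) : ℝ) := by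
    have h2 := congrFun ha (2 : Fin 3)
    simpa [rvec, Fin.val_two] using h2
  refine Mdec i hi j hj ?_ ?_ ?_
  · have : ((M01 i j : ℤ) : ℝ) = 0 := by
      simp only [M01]; push_cast
      linear_combination (-((Zv j 1 : ℤ) : ℝ)) * e0 + ((Zv j 0 : ℤ) : ℝ) * e1
    exact_mod_cast this
  · have : ((M02 i j : ℤ) : ℝ) = 0 := by
      simp only [M02]; push_cast
      linear_combination (-((Zv j 2 : ℤ) : ℝ)) * e0 + ((Zv j 0 : ℤ) : ℝ) * e2
    exact_mod_cast this
  · have : ((M12 i j : ℤ) : ℝ) = 0 := by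
      simp only [M12]; push_cast
      linear_combination (-((Zv j 2 : ℤ) : ℝ)) * e1 + ((Zv j 1 : ℤ) : ℝ) * e2
    exact_mod_cast this

abbrev PRay := {L : Submodule ℝ V3 // L ∈ PeresSet}

noncomputable def idx (x : PRay) : ℕ := Classical.choose (classify x.1 x.2)

lemma idx_lt (x : PRay) : idx x < 33 := (Classical.choose_spec (classify x.1 x.2)).1

lemma idx_spec (x : PRay) : x.1 = Submodule.span ℝ {rvec (idx x)} :=
  (Classical.choose_spec (classify x.1 x.2)).2

lemma idx_eq {x : PRay} {j : ℕ} (hj : j < 33)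
    (h : x.1 = Submodule.span ℝ {rvec j}) : idx x = j :=
  span_inj (idx_lt x) hj ((idx_spec x).symm.trans h)

noncomputable def colT (T : List (List ℕ)) (i₀ : ℕ) : Colouring :=
  fun x => if idx x ∈ T.getD i₀ [] then Colour.green else Colour.red

lemma colT_green {T : List (List ℕ)} {i₀ : ℕ} {x : PRay}
    (h : colT T i₀ x = Colour.green) : idx x ∈ T.getD i₀ [] := by
  by_contra hm; simp only [colT, if_neg hm] at h; exact Colour.noConfusion h

lemma colT_red {T : List (List ℕ)} {i₀ : ℕ} {x : PRay}
    (h : colT T i₀ x = Colour.red) : idx x ∉ T.getD i₀ [] := by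
  intro hm; simp only [colT, if_pos hm] at h; exact Colour.noConfusion h

lemma edge_mem {x y : PRay} (h : RayOrtho x.1 y.1) :
    (idx x) * 33 + (idx y) ∈ edgeL := by
  refine F1 _ (idx_lt x) _ (idx_lt y) (ortho_dint ?_)
  rw [← idx_spec x, ← idx_spec y]; exact h

lemma tri_mem {x y z : PRay} (h : MutuallyOrtho x.1 y.1 z.1) :
    ((idx x) * 33 + idx y) * 33 + idx z ∈ triL := by
  obtain ⟨hxy, hxz, hyz⟩ := h
  have hy := idx_lt y
  have hdiv : ((idx x) * 33 + idx y) / 33 = idx x := by omega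
  have hmod : ((idx x) * 33 + idx y) % 33 = idx y := by omega
  refine F2 _ (edge_mem hxy) _ (idx_lt z) ?_ ?_
  · rw [hdiv]; exact ortho_dint (by rw [← idx_spec x, ← idx_spec z]; exact hxz)
  · rw [hmod]; exact ortho_dint (by rw [← idx_spec y, ← idx_spec z]; exact hyz)

abbrev IndProp (T : List (List ℕ)) : Prop :=
  ∀ i < 33, ∀ e ∈ edgeL, ¬((e / 33) ∈ T.getD i [] ∧ (e % 33) ∈ T.getD i [])

abbrev HitProp (TA TB : List (List ℕ)) : Prop :=
  ∀ i < 33, ∀ t ∈ triL,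
    (t / 33 / 33 ∈ TA.getD i [] ∨ t / 33 % 33 ∈ TA.getD i [] ∨ t % 33 ∈ TA.getD i [] ∨
     t / 33 / 33 ∈ TB.getD i [] ∨ t / 33 % 33 ∈ TB.getD i [] ∨ t % 33 ∈ TB.getD i [])

lemma noG {T : List (List ℕ)} {i₀ : ℕ} (hi₀ : i₀ < 33) (hInd : IndProp T)
    {x y : PRay} (h : RayOrtho x.1 y.1)
    (hx : colT T i₀ x = Colour.green) (hy : colT T i₀ y = Colour.green) : False := by
  have he := edge_mem h
  have hylt := idx_lt y
  have hdiv : ((idx x) * 33 + idx y) / 33 = idx x := by omega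
  have hmod : ((idx x) * 33 + idx y) % 33 = idx y := by omega
  exact hInd i₀ hi₀ _ he ⟨by rw [hdiv]; exact colT_green hx, by rw [hmod]; exact colT_green hy⟩

lemma noRR {TA TB : List (List ℕ)} {i₀ : ℕ} (hi₀ : i₀ < 33) (hHit : HitProp TA TB)
    {x y z : PRay} (h : MutuallyOrtho x.1 y.1 z.1)
    (hx : colT TA i₀ x = Colour.red) (hy : colT TA i₀ y = Colour.red)
    (hz : colT TA i₀ z = Colour.red)
    (hx' : colT TB i₀ x = Colour.red) (hy' : colT TB i₀ y = Colour.red)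
    (hz' : colT TB i₀ z = Colour.red) : False := by
  have ht := tri_mem h
  have hylt := idx_lt y
  have hzlt := idx_lt z
  have e1 : (((idx x) * 33 + idx y) * 33 + idx z) / 33 / 33 = idx x := by omega
  have e2 : (((idx x) * 33 + idx y) * 33 + idx z) / 33 % 33 = idx y := by omega
  have e3 : (((idx x) * 33 + idx y) * 33 + idx z) % 33 = idx z := by omega
  rcases hHit i₀ hi₀ _ ht with hm|hm|hm|hm|hm|hm
  · exact colT_red hx (e1 ▸ hm)
  · exact colT_red hy (e2 ▸ hm)
  · exact colT_red hz (e3 ▸ hm)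
  · exact colT_red hx' (e1 ▸ hm)
  · exact colT_red hy' (e2 ▸ hm)
  · exact colT_red hz' (e3 ▸ hm)

lemma core (TA TB : List (List ℕ)) (W : List ℕ) (c : Colour)
    (u : PRay)
    (hIndA : IndProp TA) (hIndB : IndProp TB) (hHit : HitProp TA TB)
    (hDiagA : ∀ i < 33, (i ∈ TA.getD i [] ↔ c = Colour.green))
    (hDiagB : ∀ i < 33, (i ∈ TB.getD i [] ↔ c = Colour.green))
    (hW : ∀ i < 33, W.getD i 0 < 33 ∧
      ¬((W.getD i 0 ∈ TA.getD i []) ↔ (W.getD i 0 ∈ TB.getD i []))) :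
    ∃ γ γ' : Colouring, γ ≠ γ' ∧ γ u = c ∧ γ' u = c ∧
      (∀ 𝓕 : Set (Set Colouring), (∀ E ∈ 𝓕, IsPKSEvent E) → 𝓕.Pairwise Disjoint →
        ¬ ({γ, γ'} : Set Colouring) ⊆ ⋃₀ 𝓕) ∧
      (∀ E : Set Colouring, IsPKSEvent E → coevent {γ, γ'} E = 0) ∧
      (∀ 𝓕 : Set (Set Colouring), (∀ E ∈ 𝓕, IsPKSEvent E) → 𝓕.Pairwise Disjoint →
        coevent {γ, γ'} (⋃₀ 𝓕) = 0) ∧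
      coevent {γ, γ'} {δ : Colouring | δ u = c} = 1 := by
  classical
  have hi₀ : idx u < 33 := idx_lt u
  set γ : Colouring := colT TA (idx u) with hγdef
  set γ' : Colouring := colT TB (idx u) with hγ'def
  -- the two colourings differ
  have hne : γ ≠ γ' := by
    intro hEq
    obtain ⟨hwlt, hwne⟩ := hW (idx u) hi₀
    set w := W.getD (idx u) 0 with hwdef
    have hmem : Submodule.span ℝ {rvec w} ∈ PeresSet := PSmem w hwlt
    have hidx : idx (⟨Submodule.span ℝ {rvec w}, hmem⟩ : PRay) = w := idx_eq hwlt rfl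
    have hcong := congrFun hEq (⟨Submodule.span ℝ {rvec w}, hmem⟩ : PRay)
    simp only [hγdef, hγ'def, colT, hidx] at hcong
    by_cases hA : w ∈ TA.getD (idx u) [] <;> by_cases hB : w ∈ TB.getD (idx u) []
    · exact hwne (iff_of_true hA hB)
    · rw [if_pos hA, if_neg hB] at hcong; exact Colour.noConfusion hcong
    · rw [if_neg hA, if_pos hB] at hcong; exact Colour.noConfusion hcong
    · exact hwne (iff_of_false hA hB)
  -- colour of u
  have hcolu : ∀ (T : List (List ℕ)), (∀ i < 33, (i ∈ T.getD i [] ↔ c = Colour.green)) →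
      colT T (idx u) u = c := by
    intro T hDiag
    by_cases hm : idx u ∈ T.getD (idx u) []
    · have hc : c = Colour.green := (hDiag _ hi₀).mp hm
      simp only [colT, if_pos hm, hc]
    · have hc : c = Colour.red := by
        cases c
        · exact absurd ((hDiag _ hi₀).mpr rfl) hm
        · rfl
      simp only [colT, if_neg hm, hc]
  have hγu : γ u = c := hcolu TA hDiagA
  have hγ'u : γ' u = c := hcolu TB hDiagB
  -- no single PKS event contains both
  have hsingle : ∀ E : Set Colouring, IsPKSEvent E → ¬ ({γ, γ'} : Set Colouring) ⊆ E := by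
    intro E hE hsub
    have hγE : γ ∈ E := hsub (Set.mem_insert _ _)
    have hγ'E : γ' ∈ E := hsub (Set.mem_insert_of_mem _ rfl)
    rcases hE with ⟨x, y, z, hxyz, rfl⟩ | ⟨x, y, hxy, rfl⟩
    · exact noRR hi₀ hHit hxyz hγE.1 hγE.2.1 hγE.2.2 hγ'E.1 hγ'E.2.1 hγ'E.2.2
    · exact noG hi₀ hIndA hxy hγE.1 hγE.2
  -- not contained in a disjoint union
  have hmain : ∀ 𝓕 : Set (Set Colouring), (∀ E ∈ 𝓕, IsPKSEvent E) → 𝓕.Pairwise Disjoint →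
      ¬ ({γ, γ'} : Set Colouring) ⊆ ⋃₀ 𝓕 := by
    intro 𝓕 hF hdis hsub
    obtain ⟨E, hE, hγE⟩ := Set.mem_sUnion.mp (hsub (Set.mem_insert _ _))
    obtain ⟨E', hE', hγ'E'⟩ := Set.mem_sUnion.mp (hsub (Set.mem_insert_of_mem _ rfl))
    have hER : ∃ x y z : PRay, MutuallyOrtho x.1 y.1 z.1 ∧
        E = {δ : Colouring | δ x = Colour.red ∧ δ y = Colour.red ∧ δ z = Colour.red} := by
      rcases hF E hE with h | ⟨x, y, hxy, rfl⟩
      · exact h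
      · exact absurd hγE (fun hmem => noG hi₀ hIndA hxy hmem.1 hmem.2)
    have hER' : ∃ x y z : PRay, MutuallyOrtho x.1 y.1 z.1 ∧
        E' = {δ : Colouring | δ x = Colour.red ∧ δ y = Colour.red ∧ δ z = Colour.red} := by
      rcases hF E' hE' with h | ⟨x, y, hxy, rfl⟩
      · exact h
      · exact absurd hγ'E' (fun hmem => noG hi₀ hIndB hxy hmem.1 hmem.2)
    obtain ⟨x, y, z, hxyz, rfl⟩ := hER
    obtain ⟨x', y', z', hxyz', rfl⟩ := hER'
    by_cases heq : ({δ : Colouring | δ x = Colour.red ∧ δ y = Colour.red ∧ δ z = Colour.red} : Set Colouring)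
        = {δ : Colouring | δ x' = Colour.red ∧ δ y' = Colour.red ∧ δ z' = Colour.red}
    · rw [heq] at hγE
      exact noRR hi₀ hHit hxyz' hγE.1 hγE.2.1 hγE.2.2 hγ'E'.1 hγ'E'.2.1 hγ'E'.2.2
    · have hd := hdis hE hE' heq
      have h1 : (fun _ => Colour.red : Colouring) ∈
          ({δ : Colouring | δ x = Colour.red ∧ δ y = Colour.red ∧ δ z = Colour.red} : Set Colouring) :=
        ⟨rfl, rfl, rfl⟩
      have h2 : (fun _ => Colour.red : Colouring) ∈
          ({δ : Colouring | δ x' = Colour.red ∧ δ y' = Colour.red ∧ δ z' = Colour.red} : Set Colouring) :=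
        ⟨rfl, rfl, rfl⟩
      exact Set.disjoint_left.mp hd h1 h2
  refine ⟨γ, γ', hne, hγu, hγ'u, hmain, ?_, ?_, ?_⟩
  · intro E hE
    simp only [coevent]
    rw [if_neg (hsingle E hE)]
  · intro 𝓕 hF hdis
    simp only [coevent]
    rw [if_neg (hmain 𝓕 hF hdis)]
  · have hsub : ({γ, γ'} : Set Colouring) ⊆ {δ : Colouring | δ u = c} := by
      intro δ hδ
      rcases Set.mem_insert_iff.mp hδ with rfl | h
      · exact hγu
      · rw [Set.mem_singleton_iff] at h
        rw [h]; exact hγ'u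
    simp only [coevent]
    rw [if_pos hsub]

set_option maxRecDepth 40000 in
set_option maxHeartbeats 4000000 in
lemma dIndAg : IndProp TAg := by decide
set_option maxRecDepth 40000 in
set_option maxHeartbeats 4000000 in
lemma dIndBg : IndProp TBg := by decide
set_option maxRecDepth 40000 in
set_option maxHeartbeats 4000000 in
lemma dIndAr : IndProp TAr := by decide
set_option maxRecDepth 40000 in
set_option maxHeartbeats 4000000 in
lemma dIndBr : IndProp TBr := by decide
set_option maxRecDepth 40000 in
set_option maxHeartbeats 4000000 in
lemma dHitg : HitProp TAg TBg := by decide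
set_option maxRecDepth 40000 in
set_option maxHeartbeats 4000000 in
lemma dHitr : HitProp TAr TBr := by decide
set_option maxRecDepth 40000 in
set_option maxHeartbeats 4000000 in
lemma dDiagAg : ∀ i < 33, (i ∈ TAg.getD i [] ↔ Colour.green = Colour.green) := by decide
set_option maxRecDepth 40000 in
set_option maxHeartbeats 4000000 in
lemma dDiagBg : ∀ i < 33, (i ∈ TBg.getD i [] ↔ Colour.green = Colour.green) := by decide
set_option maxRecDepth 40000 in
set_option maxHeartbeats 4000000 in
lemma dDiagAr : ∀ i < 33, (i ∈ TAr.getD i [] ↔ Colour.red = Colour.green) := by decide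
set_option maxRecDepth 40000 in
set_option maxHeartbeats 4000000 in
lemma dDiagBr : ∀ i < 33, (i ∈ TBr.getD i [] ↔ Colour.red = Colour.green) := by decide
set_option maxRecDepth 40000 in
set_option maxHeartbeats 4000000 in
lemma dWg : ∀ i < 33, Wg.getD i 0 < 33 ∧
    ¬((Wg.getD i 0 ∈ TAg.getD i []) ↔ (Wg.getD i 0 ∈ TBg.getD i [])) := by decide
set_option maxRecDepth 40000 in
set_option maxHeartbeats 4000000 in
lemma dWr : ∀ i < 33, Wr.getD i 0 < 33 ∧
    ¬((Wr.getD i 0 ∈ TAr.getD i []) ↔ (Wr.getD i 0 ∈ TBr.getD i [])) := by decide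

end Stmt9Aux

/-- For every ray `u` of the Peres set and every colour `c`, there are two distinct
colourings `γ, γ'`, both giving `u` the colour `c`, such that `{γ, γ'}` is not contained
in any union of pairwise disjoint PKS events; consequently the multiplicative co-event
`{γ, γ'}*` maps every PKS event and every disjoint union of PKS events to `0` while
valuing the event "`u` is coloured `c`" as `1`. -/
theorem stmt9_coevent_for_each_colour
    (u : {L : Submodule ℝ V3 // L ∈ PeresSet}) (c : Colour) :
    ∃ γ γ' : Colouring, γ ≠ γ' ∧ γ u = c ∧ γ' u = c ∧
      (∀ 𝓕 : Set (Set Colouring), (∀ E ∈ 𝓕, IsPKSEvent E) → 𝓕.Pairwise Disjoint →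
        ¬ ({γ, γ'} : Set Colouring) ⊆ ⋃₀ 𝓕) ∧
      (∀ E : Set Colouring, IsPKSEvent E → coevent {γ, γ'} E = 0) ∧
      (∀ 𝓕 : Set (Set Colouring), (∀ E ∈ 𝓕, IsPKSEvent E) → 𝓕.Pairwise Disjoint →
        coevent {γ, γ'} (⋃₀ 𝓕) = 0) ∧
      coevent {γ, γ'} {δ : Colouring | δ u = c} = 1 := by
  classical
  cases c with
  | green =>
      exact Stmt9Aux.core Stmt9Aux.TAg Stmt9Aux.TBg Stmt9Aux.Wg Colour.green u
        Stmt9Aux.dIndAg Stmt9Aux.dIndBg Stmt9Aux.dHitg Stmt9Aux.dDiagAg Stmt9Aux.dDiagBg Stmt9Aux.dWg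
  | red =>
      exact Stmt9Aux.core Stmt9Aux.TAr Stmt9Aux.TBr Stmt9Aux.Wr Colour.red u
        Stmt9Aux.dIndAr Stmt9Aux.dIndBr Stmt9Aux.dHitr Stmt9Aux.dDiagAr Stmt9Aux.dDiagBr Stmt9Aux.dWr

end
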